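/- Suppose that for each axis the one-dimensional quadrature rule (nodes x^{(i)}, weights w^{(i)}, i=0,...,s−1, with nonnegative weights summing to 1) is exact for polynomials of degree ≤ 2s−1 with error bound ε₁(g) ≤ c_s · sup|g^{(2s)}| for C^{2s} functions g, where c_s = (s!)^4 / ((2s+1)((2s)!)^3). If f : [0,1]^d → ℝ has continuous partial derivatives of order 2s in each variable separately, each bounded in absolute value by D, then the tensor-product quadrature error satisfies |∫_{[0,1]^d} f − S_{X,W}(f)| ≤ c_s · D · d. -/

import Mathlib

open MeasureTheory

noncomputable def TQaux.nu : Measure ℝ := volume.restrict (Set.Icc 0 1)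

noncomputable def TQaux.mu (d : ℕ) : Measure (Fin d → ℝ) := Measure.pi fun _ => TQaux.nu

instance : IsProbabilityMeasure TQaux.nu := by
  constructor
  simp [TQaux.nu, Measure.restrict_apply_univ, Real.volume_Icc]

instance (d : ℕ) : IsProbabilityMeasure (TQaux.mu d) := by
  rw [TQaux.mu]; infer_instance

lemma TQaux.restrict_eq (d : ℕ) :
    (volume : Measure (Fin d → ℝ)).restrict (Set.Icc 0 1) = TQaux.mu d := by
  simp only [TQaux.mu]
  refine (Measure.pi_eq fun t ht => ?_).symm
  rw [Measure.restrict_apply (MeasurableSet.univ_pi ht), ← Set.pi_univ_Icc,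
    ← Set.pi_inter_distrib, volume_pi_pi]
  simp only [Pi.zero_apply, Pi.one_apply]
  simp only [TQaux.nu]
  congr 1
  ext i
  rw [Measure.restrict_apply (ht i)]

lemma TQaux.sum_cons {d s : ℕ} (F : (Fin (d+1) → Fin s) → ℝ) :
    ∑ i, F i = ∑ m : Fin s, ∑ i' : Fin d → Fin s, F (Fin.cons m i') := by
  rw [← Equiv.sum_comp (Fin.consEquiv fun _ => Fin s) F, Fintype.sum_prod_type]
  rfl

lemma TQaux.integral_mu_zero (f : (Fin 0 → ℝ) → ℝ) : ∫ t, f t ∂ TQaux.mu 0 = f isEmptyElim := by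
  rw [TQaux.mu, Measure.pi_of_empty]
  exact integral_dirac' f _ (StronglyMeasurable.of_subsingleton_dom (f := f))

lemma TQaux.fubini_cons {d : ℕ} (f : (Fin (d+1) → ℝ) → ℝ) (hf : Integrable f (TQaux.mu (d+1))) :
    ∫ t, f t ∂ TQaux.mu (d+1) = ∫ u, (∫ y, f (Fin.cons u y) ∂ TQaux.mu d) ∂ TQaux.nu := by
  have mp : MeasurePreserving (⇑(MeasurableEquiv.piFinSuccAbove (fun _ : Fin (d+1) => ℝ) 0).symm)
      (TQaux.nu.prod (TQaux.mu d)) (TQaux.mu (d+1)) :=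
    (measurePreserving_piFinSuccAbove (fun _ : Fin (d+1) => TQaux.nu) 0).symm
  have he := (MeasurableEquiv.piFinSuccAbove (fun _ : Fin (d+1) => ℝ) 0).symm.measurableEmbedding
  rw [← mp.integral_comp he f]
  have hint : Integrable (f ∘ (MeasurableEquiv.piFinSuccAbove (fun _ : Fin (d+1) => ℝ) 0).symm)
      (TQaux.nu.prod (TQaux.mu d)) := (mp.integrable_comp_emb he).2 hf
  rw [show (fun z => f ((MeasurableEquiv.piFinSuccAbove (fun _ : Fin (d+1) => ℝ) 0).symm z))
      = f ∘ (MeasurableEquiv.piFinSuccAbove (fun _ : Fin (d+1) => ℝ) 0).symm from rfl]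
  rw [MeasureTheory.integral_prod _ hint]
  congr 1
  ext u
  congr 1
  ext y
  simp [MeasurableEquiv.piFinSuccAbove, Fin.insertNthEquiv, Fin.insertNth_zero]

lemma TQaux.cont_cons {d : ℕ} : Continuous (fun p : ℝ × (Fin d → ℝ) => (Fin.cons p.1 p.2 : Fin (d+1) → ℝ)) := by
  refine continuous_pi fun j => ?_
  refine Fin.cases ?_ (fun k => ?_) j
  · simpa using continuous_fst
  · simpa using (continuous_apply k).comp' continuous_snd

lemma TQaux.mem_box_cons {d : ℕ} {u : ℝ} (hu : u ∈ Set.Icc (0:ℝ) 1) {y : Fin d → ℝ}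
    (hy : y ∈ Set.Icc (0 : Fin d → ℝ) 1) :
    (Fin.cons u y : Fin (d+1) → ℝ) ∈ Set.Icc (0 : Fin (d+1) → ℝ) 1 := by
  rw [Set.mem_Icc] at *
  constructor <;> intro j
  all_goals refine Fin.cases ?_ (fun k => ?_) j
  · simpa using hu.1
  · simpa using hy.1 k
  · simpa using hu.2
  · simpa using hy.2 k

lemma TQaux.integrable_slice {d : ℕ} (f : (Fin (d+1) → ℝ) → ℝ) (hf : Integrable f (TQaux.mu (d+1))) :
    Integrable (fun u => ∫ y, f (Fin.cons u y) ∂ TQaux.mu d) TQaux.nu := by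
  have mp : MeasurePreserving (⇑(MeasurableEquiv.piFinSuccAbove (fun _ : Fin (d+1) => ℝ) 0).symm)
      (TQaux.nu.prod (TQaux.mu d)) (TQaux.mu (d+1)) :=
    (measurePreserving_piFinSuccAbove (fun _ : Fin (d+1) => TQaux.nu) 0).symm
  have he := (MeasurableEquiv.piFinSuccAbove (fun _ : Fin (d+1) => ℝ) 0).symm.measurableEmbedding
  have hint : Integrable (f ∘ (MeasurableEquiv.piFinSuccAbove (fun _ : Fin (d+1) => ℝ) 0).symm)
      (TQaux.nu.prod (TQaux.mu d)) := (mp.integrable_comp_emb he).2 hf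
  have := hint.integral_prod_left
  simpa [Function.comp_def, MeasurableEquiv.piFinSuccAbove, Fin.insertNthEquiv,
    Fin.insertNth_zero] using this

lemma TQaux.weight_sum {s : ℕ} (w : Fin s → ℝ) (hw1 : ∑ i, w i = 1) :
    ∀ d : ℕ, ∑ i : Fin d → Fin s, ∏ k, w (i k) = 1 := by
  intro d
  induction d with
  | zero => simp
  | succ d IH =>
    rw [TQaux.sum_cons (fun i => ∏ k, w (i k))]
    simp_rw [Fin.prod_univ_succ, Fin.cons_zero, Fin.cons_succ]
    simp only [← Finset.mul_sum, IH, mul_one]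
    exact hw1

lemma TQaux.aux_main {s : ℕ} (x w : Fin s → ℝ) (hx : ∀ i, x i ∈ Set.Icc (0:ℝ) 1)
    (hw0 : ∀ i, 0 ≤ w i) (hw1 : ∑ i, w i = 1) (c : ℝ) :
    ∀ (d : ℕ) (f : (Fin d → ℝ) → ℝ), ContinuousOn f (Set.Icc 0 1) →
    (∀ (k : Fin d) (y : Fin d → ℝ), y ∈ Set.Icc 0 1 →
      |(∫ t in Set.Icc (0:ℝ) 1, f (Function.update y k t)) -
        ∑ i, f (Function.update y k (x i)) * w i| ≤ c) →
    |(∫ t, f t ∂ TQaux.mu d) - ∑ i : Fin d → Fin s, f (fun k => x (i k)) * ∏ k, w (i k)| ≤ c * d := by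
  intro d
  induction d with
  | zero =>
    intro f hf hq
    rw [TQaux.integral_mu_zero]
    have hall : ∀ g : Fin 0 → Fin s, (fun k => x (g k)) = (isEmptyElim : Fin 0 → ℝ) :=
      fun g => Subsingleton.elim _ _
    simp [hall]
  | succ d IH =>
    intro f hf hq
    have hXbox : ∀ i' : Fin d → Fin s, (fun k => x (i' k)) ∈ Set.Icc (0 : Fin d → ℝ) 1 := by
      intro i'
      rw [Set.mem_Icc]
      exact ⟨fun k => (hx (i' k)).1, fun k => (hx (i' k)).2⟩
    have hfint : Integrable f (TQaux.mu (d+1)) := by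
      rw [← TQaux.restrict_eq]
      exact hf.integrableOn_compact isCompact_Icc
    have key := TQaux.fubini_cons f hfint
    set I : ℝ → ℝ := fun u => ∫ y, f (Fin.cons u y) ∂ TQaux.mu d with hI
    set B : ℝ → ℝ :=
      fun u => ∑ i' : Fin d → Fin s, f (Fin.cons u (fun k => x (i' k))) * ∏ k, w (i' k) with hB
    -- pointwise induction bound
    have hIH : ∀ u ∈ Set.Icc (0:ℝ) 1, |I u - B u| ≤ c * d := by
      intro u hu
      refine IH (fun y => f (Fin.cons u y)) ?_ ?_
      · exact hf.comp (TQaux.cont_cons.comp (Continuous.prodMk_right u)).continuousOn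
          (fun y hy => TQaux.mem_box_cons hu hy)
      · intro k y hy
        have h := hq k.succ (Fin.cons u y) (TQaux.mem_box_cons hu hy)
        simp only [← Fin.cons_update] at h
        exact h
    -- integrability
    have hIint : Integrable I TQaux.nu := TQaux.integrable_slice f hfint
    have hslice_cont : ∀ i' : Fin d → Fin s,
        ContinuousOn (fun u => f (Fin.cons u (fun k => x (i' k)))) (Set.Icc 0 1) := by
      intro i'
      exact hf.comp (TQaux.cont_cons.comp (continuous_id.prodMk continuous_const)).continuousOn
        (fun u hu => TQaux.mem_box_cons hu (hXbox i'))
    have hslice_int : ∀ i' : Fin d → Fin s,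
        Integrable (fun u => f (Fin.cons u (fun k => x (i' k)))) TQaux.nu := by
      intro i'
      rw [TQaux.nu]
      exact (hslice_cont i').integrableOn_compact isCompact_Icc
    have hBint : Integrable B TQaux.nu := by
      rw [hB]
      exact integrable_finset_sum _ (fun i' _ => (hslice_int i').mul_const _)
    -- first piece
    have h1 : |(∫ u, I u ∂TQaux.nu) - (∫ u, B u ∂TQaux.nu)| ≤ c * d := by
      rw [← integral_sub hIint hBint]
      have hb : ∀ᵐ u ∂TQaux.nu, ‖I u - B u‖ ≤ c * d := by
        have hmem : ∀ᵐ u ∂TQaux.nu, u ∈ Set.Icc (0:ℝ) 1 := by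
          rw [TQaux.nu]; exact ae_restrict_mem measurableSet_Icc
        exact hmem.mono fun u hu => by simpa [Real.norm_eq_abs] using hIH u hu
      have := norm_integral_le_of_norm_le_const hb
      simpa [Real.norm_eq_abs, measure_univ] using this
    -- second piece
    have hintB : ∫ u, B u ∂ TQaux.nu
        = ∑ i' : Fin d → Fin s, (∫ u, f (Fin.cons u (fun k => x (i' k))) ∂TQaux.nu) * ∏ k, w (i' k) := by
      rw [hB, integral_finset_sum _ (fun i' _ => (hslice_int i').mul_const _)]
      simp_rw [integral_mul_const]
    have hterm : ∀ i' : Fin d → Fin s,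
        |(∫ u, f (Fin.cons u (fun k => x (i' k))) ∂ TQaux.nu)
          - ∑ m, f (Fin.cons (x m) (fun k => x (i' k))) * w m| ≤ c := by
      intro i'
      have h := hq 0 (Fin.cons 0 (fun k => x (i' k)))
        (TQaux.mem_box_cons (Set.mem_Icc.2 ⟨le_refl 0, zero_le_one⟩) (hXbox i'))
      simp only [Fin.update_cons_zero] at h
      rw [TQaux.nu]
      exact h
    have h2 : |(∫ u, B u ∂TQaux.nu) - ∑ m, B (x m) * w m| ≤ c := by
      have hrhs : ∑ m, B (x m) * w m
          = ∑ i' : Fin d → Fin s,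
              (∑ m, f (Fin.cons (x m) (fun k => x (i' k))) * w m) * ∏ k, w (i' k) := by
        simp only [hB, Finset.sum_mul]
        rw [Finset.sum_comm]
        refine Finset.sum_congr rfl fun i' _ => ?_
        exact Finset.sum_congr rfl fun m _ => by ring
      rw [hintB, hrhs, ← Finset.sum_sub_distrib]
      simp_rw [← sub_mul]
      calc |∑ i' : Fin d → Fin s, ((∫ u, f (Fin.cons u (fun k => x (i' k))) ∂TQaux.nu)
              - ∑ m, f (Fin.cons (x m) (fun k => x (i' k))) * w m) * ∏ k, w (i' k)|
          ≤ ∑ i' : Fin d → Fin s, |((∫ u, f (Fin.cons u (fun k => x (i' k))) ∂TQaux.nu)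
              - ∑ m, f (Fin.cons (x m) (fun k => x (i' k))) * w m) * ∏ k, w (i' k)| :=
            Finset.abs_sum_le_sum_abs _ _
        _ ≤ ∑ i' : Fin d → Fin s, c * ∏ k, w (i' k) := by
            refine Finset.sum_le_sum fun i' _ => ?_
            rw [abs_mul, abs_of_nonneg (Finset.prod_nonneg fun k _ => hw0 (i' k))]
            exact mul_le_mul_of_nonneg_right (hterm i')
              (Finset.prod_nonneg fun k _ => hw0 (i' k))
        _ = c := by rw [← Finset.mul_sum, TQaux.weight_sum w hw1 d, mul_one]
    -- total quadrature sum
    have hQsum : (∑ i : Fin (d+1) → Fin s, f (fun k => x (i k)) * ∏ k, w (i k))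
        = ∑ m, B (x m) * w m := by
      rw [TQaux.sum_cons (fun i => f (fun k => x (i k)) * ∏ k, w (i k))]
      refine Finset.sum_congr rfl fun m _ => ?_
      rw [hB, Finset.sum_mul]
      refine Finset.sum_congr rfl fun i' _ => ?_
      have h1' : (fun k : Fin (d+1) => x ((Fin.cons m i' : Fin (d+1) → Fin s) k)) = Fin.cons (x m) (fun k => x (i' k)) := by
        funext k
        induction k using Fin.cases with
        | zero => simp
        | succ j => simp
      rw [h1', Fin.prod_univ_succ, Fin.cons_zero]
      simp only [Fin.cons_succ]
      ring
    -- assemble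
    rw [key, hQsum]
    calc |(∫ u, I u ∂TQaux.nu) - ∑ m, B (x m) * w m|
        = |((∫ u, I u ∂TQaux.nu) - (∫ u, B u ∂TQaux.nu)) + ((∫ u, B u ∂TQaux.nu) - ∑ m, B (x m) * w m)| := by
          ring_nf
      _ ≤ |(∫ u, I u ∂TQaux.nu) - (∫ u, B u ∂TQaux.nu)| + |(∫ u, B u ∂TQaux.nu) - ∑ m, B (x m) * w m| :=
          abs_add_le _ _
      _ ≤ c * d + c := add_le_add h1 h2
      _ = c * (d + 1 : ℕ) := by push_cast; ring

/-- If the univariate `s`-point quadrature rule (nonnegative weights summing to 1) has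
error at most `c_s · sup|g^{(2s)}|` on `C^{2s}` functions, where
`c_s = (s!)⁴/((2s+1)((2s)!)³)`, and `f : [0,1]^d → ℝ` has continuous partial derivatives
of order `2s` in each variable separately bounded by `D`, then the tensor-product
quadrature error is at most `c_s · D · d`. -/
theorem tensor_quadrature_smooth_error
    (d s : ℕ) (x w : Fin s → ℝ)
    (hx : ∀ i, x i ∈ Set.Icc (0:ℝ) 1)
    (hw0 : ∀ i, 0 ≤ w i) (hw1 : ∑ i, w i = 1)
    (hexact : ∀ P : Polynomial ℝ, P.natDegree ≤ 2 * s - 1 →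
      (∫ t in Set.Icc (0:ℝ) 1, P.eval t) = ∑ i, P.eval (x i) * w i)
    (hquad : ∀ g : ℝ → ℝ, ContDiffOn ℝ (2 * s) g (Set.Icc 0 1) → ∀ D' : ℝ,
      (∀ ξ ∈ Set.Icc (0:ℝ) 1,
          |iteratedDerivWithin (2 * s) g (Set.Icc 0 1) ξ| ≤ D') →
      |(∫ t in Set.Icc (0:ℝ) 1, g t) - ∑ i, g (x i) * w i| ≤
        (s.factorial : ℝ) ^ 4 / ((2 * s + 1) * ((2 * s).factorial : ℝ) ^ 3) * D')
    (f : (Fin d → ℝ) → ℝ) (hf : ContinuousOn f (Set.Icc 0 1))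
    (D : ℝ)
    (hderiv : ∀ (k : Fin d) (y : Fin d → ℝ), y ∈ Set.Icc 0 1 →
      ContDiffOn ℝ (2 * s) (fun t => f (Function.update y k t)) (Set.Icc 0 1) ∧
      ∀ ξ ∈ Set.Icc (0:ℝ) 1,
        |iteratedDerivWithin (2 * s) (fun t => f (Function.update y k t))
            (Set.Icc 0 1) ξ| ≤ D) :
    |(∫ t in Set.Icc (0 : Fin d → ℝ) 1, f t) -
        ∑ i : Fin d → Fin s, f (fun k => x (i k)) * ∏ k, w (i k)| ≤
      (s.factorial : ℝ) ^ 4 / ((2 * s + 1) * ((2 * s).factorial : ℝ) ^ 3) * D * d := by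
  have hq : ∀ (k : Fin d) (y : Fin d → ℝ), y ∈ Set.Icc 0 1 →
      |(∫ t in Set.Icc (0:ℝ) 1, f (Function.update y k t)) -
        ∑ i, f (Function.update y k (x i)) * w i| ≤
      (s.factorial : ℝ) ^ 4 / ((2 * s + 1) * ((2 * s).factorial : ℝ) ^ 3) * D :=
    fun k y hy => hquad _ (hderiv k y hy).1 D (hderiv k y hy).2
  have h := TQaux.aux_main x w hx hw0 hw1 _ d f hf hq
  rw [show (∫ t in Set.Icc (0 : Fin d → ℝ) 1, f t) = ∫ t, f t ∂ TQaux.mu d from by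
    rw [TQaux.restrict_eq]]
  exact h
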